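/- arXiv:2507.18042 — 4 statements merged into one kernel-verified Lean document; each statement's English description precedes it below -/
import Mathlib

section
/- For integers $a \geq 1$, $b \geq 0$, $c \geq 0$ with $a \geq 2b+c$, define $\alpha(a,b,c) = \binom{a}{2b+c}_q [2b+c-1]_q!! \,\mathsf{H}(b,c)$ where $\binom{n}{k}_q$ is the $q$-binomial coefficient. Then $\alpha$ satisfies the four-term recurrence $\alpha(a,b,c) = q^{2b+c}\alpha(a-1,b,c) + [a-1]_q \alpha(a-2,b-1,c) + \alpha(a-1,b,c-1)$ whenever all arguments are valid (interpreting terms with negative arguments as zero). -/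
noncomputable section

def qint (q : ℝ) (n : ℕ) : ℝ := (1 - q ^ n) / (1 - q)

def qdfact (q : ℝ) : ℕ → ℝ
  | 0 => 1
  | 1 => 1
  | (n + 2) => qint q (n + 2) * qdfact q n

def qdfactZ (q : ℝ) (n : ℤ) : ℝ := if n < 0 then 1 else qdfact q n.toNat

def qfact (q : ℝ) : ℕ → ℝ
  | 0 => 1
  | (n + 1) => qint q (n + 1) * qfact q n

/-- Gaussian (q-)binomial coefficient, zero when `k > n`. -/
def qbinom (q : ℝ) (n k : ℕ) : ℝ :=
  if k ≤ n then qfact q n / (qfact q k * qfact q (n - k)) else 0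

open Classical in
def H (q : ℝ) (b c : ℕ) : ℝ :=
  ∑ f ∈ Finset.univ.filter (fun f : Fin c → Fin (b + 1) => Monotone f),
    ∏ k : Fin c,
      qdfactZ q (2 * (f k : ℤ) + (k : ℤ) - 1) / qdfactZ q (2 * (f k : ℤ) + (k : ℤ))

/-- `α(a,b,c) = \binom{a}{2b+c}_q [2b+c-1]_q!! H(b,c)`, extended by `0` to invalid
(negative, or `a < 2b+c`) argument triples. -/
def alphaZ (q : ℝ) (a b c : ℤ) : ℝ :=
  if 0 ≤ a ∧ 0 ≤ b ∧ 0 ≤ c ∧ 2 * b + c ≤ a then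
    qbinom q a.toNat (2 * b + c).toNat * qdfactZ q (2 * b + c - 1) * H q b.toNat c.toNat
  else 0

/-!
Write `α(a,b,c) = binom(a, n) · w(b,c)` with `n = 2b+c` and `w(b,c) = [n-1]!! H(b,c)` (`alphaCoeff`), extended by
zero to negative `b` or `c`. The q-Pascal rule `binom(a, n) = q^n binom(a-1, n) + binom(a-1, n-1)`
produces the first term of the recurrence. Splitting the tuples `j₁ ≤ ⋯ ≤ j_c` of `H(b,c)`
according to whether `j_c = b` gives `w(b,c) = [n-1] w(b-1,c) + w(b,c-1)` for `(b,c) ≠ (0,0)`.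
Multiplied by `binom(a-1, n-1)`, the second summand gives `α(a-1,b,c-1)`, and the first becomes
`[a-1] α(a-2,b-1,c)` by the absorption identity `[k] binom(a-1, k) = [a-1] binom(a-2, k-1)`.
-/

variable {q : ℝ}

lemma qint_zero : qint q 0 = 0 := by simp [qint]

lemma qint_one (hq : q ≠ 1) : qint q 1 = 1 := by
  rw [qint, pow_one, div_self (sub_ne_zero.2 hq.symm)]

lemma qint_add (hq : q ≠ 1) (m n : ℕ) : qint q (m + n) = q ^ m * qint q n + qint q m := by
  have : (1 : ℝ) - q ≠ 0 := sub_ne_zero.2 hq.symm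
  simp only [qint]
  field_simp
  ring

lemma qint_pos (hq0 : 0 < q) (hq1 : q < 1) {n : ℕ} (hn : n ≠ 0) : 0 < qint q n :=
  div_pos (sub_pos.2 (pow_lt_one₀ hq0.le hq1 hn)) (sub_pos.2 hq1)

lemma qfact_pos (hq0 : 0 < q) (hq1 : q < 1) (n : ℕ) : 0 < qfact q n := by
  induction n with
  | zero => exact one_pos
  | succ n ih => exact mul_pos (qint_pos hq0 hq1 n.succ_ne_zero) ih

lemma qdfact_pos (hq0 : 0 < q) (hq1 : q < 1) (n : ℕ) : 0 < qdfact q n := by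
  induction n using Nat.strong_induction_on with
  | _ n ih =>
    match n with
    | 0 | 1 => exact one_pos
    | n + 2 => exact mul_pos (qint_pos hq0 hq1 (by omega)) (ih n (by omega))

lemma qdfactZ_pos (hq0 : 0 < q) (hq1 : q < 1) (n : ℤ) : 0 < qdfactZ q n := by
  unfold qdfactZ
  split_ifs
  exacts [one_pos, qdfact_pos hq0 hq1 _]

lemma qdfactZ_natCast_add_one (hq : q ≠ 1) (n : ℕ) :
    qdfactZ q ((n : ℤ) + 1) = qint q (n + 1) * qdfactZ q ((n : ℤ) - 1) := by
  rcases n with _ | n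
  · simp [qdfactZ, qdfact, qint_one hq]
  · simp only [qdfactZ, if_neg (by omega : ¬((n + 1 : ℕ) : ℤ) + 1 < 0),
      if_neg (by omega : ¬((n + 1 : ℕ) : ℤ) - 1 < 0),
      show (((n + 1 : ℕ) : ℤ) + 1).toNat = n + 2 by omega,
      show (((n + 1 : ℕ) : ℤ) - 1).toNat = n by omega, qdfact]

lemma qbinom_zero_right (hq0 : 0 < q) (hq1 : q < 1) (n : ℕ) : qbinom q n 0 = 1 := by
  rw [qbinom, if_pos n.zero_le, Nat.sub_zero, qfact, one_mul, div_self (qfact_pos hq0 hq1 n).ne']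

lemma qbinom_self (hq0 : 0 < q) (hq1 : q < 1) (n : ℕ) : qbinom q n n = 1 := by
  rw [qbinom, if_pos le_rfl, Nat.sub_self, qfact, mul_one, div_self (qfact_pos hq0 hq1 n).ne']

lemma qbinom_of_lt {n k : ℕ} (h : n < k) : qbinom q n k = 0 := if_neg h.not_ge

lemma qbinom_succ_succ (hq0 : 0 < q) (hq1 : q < 1) (n k : ℕ) :
    qbinom q (n + 1) (k + 1) = q ^ (k + 1) * qbinom q n (k + 1) + qbinom q n k := by
  rcases lt_trichotomy k n with hk | rfl | hk
  · obtain ⟨d, rfl⟩ := Nat.exists_eq_add_of_lt hk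
    simp only [qbinom, if_pos (by omega : k + 1 ≤ k + d + 1 + 1),
      if_pos (by omega : k + 1 ≤ k + d + 1), if_pos (by omega : k ≤ k + d + 1),
      show k + d + 1 + 1 - (k + 1) = d + 1 by omega, show k + d + 1 - (k + 1) = d by omega,
      show k + d + 1 - k = d + 1 by omega]
    have hN : qfact q (k + d + 1 + 1)
        = (q ^ (k + 1) * qint q (d + 1) + qint q (k + 1)) * qfact q (k + d + 1) := by
      rw [qfact, show k + d + 1 + 1 = (k + 1) + (d + 1) by ring, qint_add hq1.ne]
    have := (qfact_pos hq0 hq1 k).ne'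
    have := (qfact_pos hq0 hq1 d).ne'
    have := (qint_pos hq0 hq1 k.succ_ne_zero).ne'
    have := (qint_pos hq0 hq1 d.succ_ne_zero).ne'
    rw [hN, qfact.eq_2 q k, qfact.eq_2 q d]
    field_simp
  · rw [qbinom_self hq0 hq1, qbinom_self hq0 hq1, qbinom_of_lt k.lt_succ_self]
    ring
  · rw [qbinom_of_lt (by omega), qbinom_of_lt (by omega), qbinom_of_lt hk]
    ring

lemma qint_mul_qbinom_succ_succ (hq0 : 0 < q) (hq1 : q < 1) (n k : ℕ) :
    qint q (k + 1) * qbinom q (n + 1) (k + 1) = qint q (n + 1) * qbinom q n k := by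
  rcases le_or_gt k n with hk | hk
  · rw [qbinom, qbinom, if_pos (by omega), if_pos hk, show n + 1 - (k + 1) = n - k by omega,
      qfact, qfact]
    have := (qfact_pos hq0 hq1 k).ne'
    have := (qfact_pos hq0 hq1 (n - k)).ne'
    have := (qint_pos hq0 hq1 k.succ_ne_zero).ne'
    field_simp
  · rw [qbinom_of_lt (by omega), qbinom_of_lt hk, mul_zero, mul_zero]

def qbinomZ (q : ℝ) (n k : ℤ) : ℝ := if 0 ≤ k ∧ k ≤ n then qbinom q n.toNat k.toNat else 0

lemma qbinomZ_natCast (n k : ℕ) : qbinomZ q n k = qbinom q n k := by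
  rw [qbinomZ]
  split_ifs with h
  · simp
  · rw [qbinom_of_lt (by omega)]

lemma qbinomZ_neg_one (n : ℤ) : qbinomZ q n (-1) = 0 := if_neg (by omega)

lemma qbinomZ_natCast_add_one (hq0 : 0 < q) (hq1 : q < 1) (n k : ℕ) :
    qbinomZ q ((n : ℤ) + 1) k = q ^ k * qbinomZ q n k + qbinomZ q n ((k : ℤ) - 1) := by
  rw [show (n : ℤ) + 1 = ((n + 1 : ℕ) : ℤ) by push_cast; rfl, qbinomZ_natCast, qbinomZ_natCast]
  rcases k with _ | k
  · simp [qbinomZ_neg_one, qbinom_zero_right hq0 hq1]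
  · rw [show ((k + 1 : ℕ) : ℤ) - 1 = k by omega, qbinomZ_natCast, qbinom_succ_succ hq0 hq1]

lemma qint_mul_qbinomZ (hq0 : 0 < q) (hq1 : q < 1) (n k : ℕ) :
    qint q k * qbinomZ q n k = qint q n * qbinomZ q ((n : ℤ) - 1) ((k : ℤ) - 1) := by
  rcases n with _ | n <;> rcases k with _ | k
  · simp [qint_zero]
  · rw [qbinomZ_natCast, qbinom_of_lt k.succ_pos, qint_zero, mul_zero, zero_mul]
  · simp [qint_zero, qbinomZ_neg_one]
  · rw [show ((n + 1 : ℕ) : ℤ) - 1 = n by omega, show ((k + 1 : ℕ) : ℤ) - 1 = k by omega,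
      qbinomZ_natCast, qbinomZ_natCast, qint_mul_qbinom_succ_succ hq0 hq1]

open Finset

lemma Fin.monotone_snoc {α : Type*} [Preorder α] {n : ℕ} {g : Fin n → α} (hg : Monotone g)
    {x : α} (hx : ∀ i, g i ≤ x) : Monotone (Fin.snoc g x : Fin (n + 1) → α) := by
  intro i j hij
  induction j using Fin.lastCases with
  | last =>
    induction i using Fin.lastCases with
    | last => exact le_rfl
    | cast i => simpa using hx i
  | cast j =>
    induction i using Fin.lastCases with
    | last => exact absurd hij (by simp)
    | cast i => simpa using hg (Fin.castSucc_le_castSucc_iff.1 hij)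

open Classical in
def monotoneMaps (c m : ℕ) : Finset (Fin c → Fin m) := univ.filter (fun f => Monotone f)

lemma mem_monotoneMaps {c m : ℕ} {f : Fin c → Fin m} : f ∈ monotoneMaps c m ↔ Monotone f := by
  simp [monotoneMaps]

lemma sum_monotoneMaps_filter_last_ne {M : Type*} [AddCommMonoid M] (c m : ℕ)
    (F : (Fin (c + 1) → Fin (m + 1)) → M) :
    ∑ f ∈ monotoneMaps (c + 1) (m + 1) with f (Fin.last c) ≠ Fin.last m, F f
      = ∑ g ∈ monotoneMaps (c + 1) m, F (Fin.castSucc ∘ g) := by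
  symm
  refine sum_nbij (Fin.castSucc ∘ ·) (fun g hg => ?_)
    ((Fin.castSucc_injective m).comp_left.injOn) (fun f hf => ?_) (fun _ _ => rfl)
  · rw [mem_filter, mem_monotoneMaps] at *
    exact ⟨Fin.strictMono_castSucc.monotone.comp hg, Fin.castSucc_ne_last _⟩
  · rw [coe_filter, Set.mem_ofPred_eq, mem_monotoneMaps] at hf
    have hlt (k : Fin (c + 1)) : f k ≠ Fin.last m :=
      ((hf.1 (Fin.le_last k)).trans_lt (Fin.lt_last_iff_ne_last.2 hf.2)).ne
    refine ⟨fun k => (f k).castPred (hlt k), ?_, funext fun k => Fin.castSucc_castPred _ _⟩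
    rw [mem_coe, mem_monotoneMaps]
    exact fun i j hij => Fin.castPred_le_castPred_iff.2 (hf.1 hij)

lemma sum_monotoneMaps_filter_last_eq {M : Type*} [AddCommMonoid M] (c m : ℕ)
    (F : (Fin (c + 1) → Fin (m + 1)) → M) :
    ∑ f ∈ monotoneMaps (c + 1) (m + 1) with f (Fin.last c) = Fin.last m, F f
      = ∑ g ∈ monotoneMaps c (m + 1), F (Fin.snoc g (Fin.last m)) := by
  symm
  refine sum_nbij (fun g => Fin.snoc g (Fin.last m)) (fun g hg => ?_) (fun g _ g' _ h => ?_)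
    (fun f hf => ?_) (fun _ _ => rfl)
  · rw [mem_filter, mem_monotoneMaps] at *
    exact ⟨Fin.monotone_snoc hg fun _ => Fin.le_last _, Fin.snoc_last _ _⟩
  · simpa using congrArg Fin.init h
  · rw [coe_filter, Set.mem_ofPred_eq, mem_monotoneMaps] at hf
    refine ⟨Fin.init f, ?_, by simp only [← hf.2, Fin.snoc_init_self]⟩
    rw [mem_coe, mem_monotoneMaps]
    exact hf.1.comp Fin.strictMono_castSucc.monotone

def hFactor (q : ℝ) (j : ℕ) : ℝ := qdfactZ q ((j : ℤ) - 1) / qdfactZ q j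

lemma qdfactZ_mul_hFactor (hq0 : 0 < q) (hq1 : q < 1) (j : ℕ) :
    qdfactZ q j * hFactor q j = qdfactZ q ((j : ℤ) - 1) :=
  mul_div_cancel₀ _ (qdfactZ_pos hq0 hq1 _).ne'

/-- Indexed by the size `m` of the range rather than by `b = m - 1`, so that the empty range
`Fin 0` is allowed and `hSum_succ_succ` also covers `b = 0`. -/
def hSum (q : ℝ) (m c : ℕ) : ℝ := ∑ f ∈ monotoneMaps c m, ∏ k, hFactor q (2 * f k + k)

lemma H_eq_hSum (b c : ℕ) : H q b c = hSum q (b + 1) c := by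
  simp only [H, hSum, hFactor, monotoneMaps]
  push_cast
  rfl

lemma hSum_zero_right (m : ℕ) : hSum q m 0 = 1 := by
  simp [hSum, monotoneMaps, Subsingleton.monotone]

lemma hSum_zero_succ (c : ℕ) : hSum q 0 (c + 1) = 0 := by
  simp [hSum, monotoneMaps]

lemma hSum_succ_succ (m c : ℕ) :
    hSum q (m + 1) (c + 1) = hSum q m (c + 1) + hFactor q (2 * m + c) * hSum q (m + 1) c := by
  rw [hSum, ← sum_filter_not_add_sum_filter _ (fun f => f (Fin.last c) = Fin.last m),
    sum_monotoneMaps_filter_last_ne, sum_monotoneMaps_filter_last_eq, hSum, hSum, mul_sum]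
  congr 1
  refine sum_congr rfl fun g _ => ?_
  rw [Fin.prod_univ_castSucc, mul_comm]
  simp

def alphaCoeff (q : ℝ) (b c : ℤ) : ℝ :=
  if 0 ≤ b ∧ 0 ≤ c then qdfactZ q (2 * b + c - 1) * H q b.toNat c.toNat else 0

lemma alphaZ_eq_qbinomZ_mul_alphaCoeff (a b c : ℤ) :
    alphaZ q a b c = qbinomZ q a (2 * b + c) * alphaCoeff q b c := by
  unfold alphaZ qbinomZ alphaCoeff
  split_ifs <;> first | omega | ring

lemma alphaCoeff_natCast (b c : ℕ) :
    alphaCoeff q b c = qdfactZ q (((2 * b + c : ℕ) : ℤ) - 1) * hSum q (b + 1) c := by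
  simp [alphaCoeff, H_eq_hSum]

lemma alphaCoeff_neg_one_left (c : ℤ) : alphaCoeff q (-1) c = 0 := if_neg (by omega)

lemma alphaCoeff_neg_one_right (b : ℤ) : alphaCoeff q b (-1) = 0 := if_neg (by omega)

lemma alphaCoeff_recurrence (hq0 : 0 < q) (hq1 : q < 1) (b c : ℕ) (hbc : b ≠ 0 ∨ c ≠ 0) :
    alphaCoeff q b c
      = qint q (2 * b + c - 1) * alphaCoeff q ((b : ℤ) - 1) c + alphaCoeff q b ((c : ℤ) - 1) := by
  rcases c with _ | c
  · obtain ⟨b, rfl⟩ := Nat.exists_eq_succ_of_ne_zero (hbc.resolve_right (by simp))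
    rw [show ((b + 1 : ℕ) : ℤ) - 1 = b by omega, show ((0 : ℕ) : ℤ) - 1 = -1 by rfl,
      alphaCoeff_neg_one_right, add_zero, alphaCoeff_natCast, alphaCoeff_natCast,
      hSum_zero_right, hSum_zero_right, show 2 * (b + 1) + 0 = 2 * b + 1 + 1 by ring,
      show ((2 * b + 1 + 1 : ℕ) : ℤ) - 1 = ((2 * b : ℕ) : ℤ) + 1 by push_cast; ring,
      Nat.add_sub_cancel, add_zero, qdfactZ_natCast_add_one hq1.ne]
    ring
  · rw [show ((c + 1 : ℕ) : ℤ) - 1 = c by omega, show 2 * b + (c + 1) - 1 = 2 * b + c by omega,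
      alphaCoeff_natCast b (c + 1), alphaCoeff_natCast b c, hSum_succ_succ, mul_add, ← mul_assoc,
      show ((2 * b + (c + 1) : ℕ) : ℤ) - 1 = ((2 * b + c : ℕ) : ℤ) by push_cast; ring,
      qdfactZ_mul_hFactor hq0 hq1, add_left_inj]
    rcases b with _ | b
    · simp [hSum_zero_succ, alphaCoeff_neg_one_left]
    · rw [show ((b + 1 : ℕ) : ℤ) - 1 = b by omega, alphaCoeff_natCast,
        show 2 * (b + 1) + c = 2 * b + (c + 1) + 1 by ring, Nat.cast_succ,
        qdfactZ_natCast_add_one hq1.ne]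
      ring

theorem alpha_recurrence_general (q : ℝ) (hq0 : 0 < q) (hq1 : q < 1)
    (a b c : ℕ) (ha : 1 ≤ a) :
    alphaZ q a b c
      = q ^ (2 * b + c) * alphaZ q ((a : ℤ) - 1) b c
        + qint q (a - 1) * alphaZ q ((a : ℤ) - 2) ((b : ℤ) - 1) c
        + alphaZ q ((a : ℤ) - 1) b ((c : ℤ) - 1) := by
  obtain ⟨a, rfl⟩ := Nat.exists_eq_add_of_le' ha
  simp only [alphaZ_eq_qbinomZ_mul_alphaCoeff]
  rw [Nat.cast_succ, add_sub_cancel_right, show (a : ℤ) + 1 - 2 = a - 1 by ring,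
    Nat.add_sub_cancel, show 2 * (b : ℤ) + c = ((2 * b + c : ℕ) : ℤ) by push_cast; ring,
    show 2 * ((b : ℤ) - 1) + c = ((2 * b + c : ℕ) : ℤ) - 1 - 1 by push_cast; ring,
    show 2 * (b : ℤ) + (c - 1) = ((2 * b + c : ℕ) : ℤ) - 1 by push_cast; ring,
    qbinomZ_natCast_add_one hq0 hq1]
  by_cases hbc : b = 0 ∧ c = 0
  · obtain ⟨rfl, rfl⟩ := hbc
    simp [qbinomZ_neg_one, alphaCoeff_neg_one_left, alphaCoeff_neg_one_right]
  have habsorb := qint_mul_qbinomZ hq0 hq1 a (2 * b + c - 1)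
  rw [show ((2 * b + c - 1 : ℕ) : ℤ) = ((2 * b + c : ℕ) : ℤ) - 1 by omega] at habsorb
  rw [alphaCoeff_recurrence hq0 hq1 b c (by omega)]
  linear_combination alphaCoeff q ((b : ℤ) - 1) c * habsorb

/-- The four-term recurrence
`α(a,b,c) = q^{2b+c} α(a-1,b,c) + [a-1]_q α(a-2,b-1,c) + α(a-1,b,c-1)`. -/
theorem alpha_recurrence (q : ℝ) (hq0 : 0 < q) (hq1 : q < 1)
    (a b c : ℕ) (ha : 1 ≤ a) (habc : 2 * b + c ≤ a) :
    alphaZ q a b c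
      = q ^ (2 * b + c) * alphaZ q ((a : ℤ) - 1) b c
        + qint q (a - 1) * alphaZ q ((a : ℤ) - 2) ((b : ℤ) - 1) c
        + alphaZ q ((a : ℤ) - 1) b ((c : ℤ) - 1) :=
  alpha_recurrence_general q hq0 hq1 a b c ha
end
end

section
/- For every integer $n \geq 1$, $\sum_{0\le j_1\le j_2\le\cdots\le j_n\le 1} \prod_{r=1}^{n}\frac{(2j_r+r-2)!!}{(2j_r+r-1)!!} = \frac{1}{(n+1)!!}\sum_{m=0}^{n}(m+1) = \frac{(n+1)(n+2)}{2(n+1)!!}$, where the sum is over weakly increasing sequences $j_1 \le \cdots \le j_n$ with each $j_r \in \{0,1\}$. -/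
/-!
A monotone `f : Fin n → Fin 2` is a threshold function: `f r = 0` exactly for `r < t`,
where `0 ≤ t ≤ n`. For the threshold `t` the product telescopes: writing `g k = (k - 1)!!`,
the factors are `g r / g (r + 1)` for `r < t` and `g (r + 2) / g (r + 3)` for `r ≥ t`, so the
product is `g (t + 2) / (g t * g (n + 2)) = (t + 1) / (n + 1)!!`. Summing over `t` gives the result.
-/

noncomputable section

/-- Ordinary double factorial extended to integers, with value `1` on negatives
(in particular `(-1)!! = 1`). -/
def dfactZ (n : ℤ) : ℝ := if n < 0 then 1 else (Nat.doubleFactorial n.toNat : ℝ)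

open Finset Nat

theorem Finset.prod_Ico_div_succ_of_ne_zero {K : Type*} [CommGroupWithZero K] {g : ℕ → K}
    (hg : ∀ k, g k ≠ 0) {m n : ℕ} (hmn : m ≤ n) :
    ∏ i ∈ Ico m n, g i / g (i + 1) = g m / g n := by
  induction n, hmn using Nat.le_induction with
  | base => simp [hg]
  | succ n hmn ih =>
    rw [prod_Ico_succ_top hmn, ih]
    field_simp [hg]

theorem Finset.prod_range_ite_div_succ {K : Type*} [CommGroupWithZero K] {g : ℕ → K}
    (hg : ∀ k, g k ≠ 0) {t n : ℕ} (ht : t ≤ n) :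
    ∏ r ∈ range n, (if r < t then g r / g (r + 1) else g (r + 2) / g (r + 3))
      = g 0 / g t * (g (t + 2) / g (n + 2)) := by
  rw [← prod_range_mul_prod_Ico _ ht, prod_congr rfl fun r hr => if_pos (mem_range.mp hr),
    prod_congr rfl fun r hr => if_neg (not_lt.mpr (mem_Ico.mp hr).1), range_eq_Ico,
    prod_Ico_div_succ_of_ne_zero hg (Nat.zero_le t)]
  exact congrArg _ (prod_Ico_div_succ_of_ne_zero (g := fun k => g (k + 2)) (fun _ => hg _) ht)

theorem Fin.mem_iff_lt_card_of_isLowerSet {n : ℕ} {S : Finset (Fin n)}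
    (hS : IsLowerSet (S : Set (Fin n))) (r : Fin n) : r ∈ S ↔ (r : ℕ) < #S := by
  constructor
  · intro hr
    have : Iic r ⊆ S := fun s hs => mem_coe.mp <| hS (mem_Iic.mp hs) (mem_coe.mpr hr)
    have := card_le_card this
    rw [Fin.card_Iic] at this
    omega
  · intro hlt
    by_contra hr
    have : S ⊆ Iio r := fun s hs => mem_Iio.mpr <| lt_of_not_ge fun hrs => hr (hS hrs hs)
    have := card_le_card this
    rw [Fin.card_Iio] at this
    omega

def threshold (n t : ℕ) : Fin n → Fin 2 := fun r => if (r : ℕ) < t then 0 else 1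

theorem monotone_threshold (n t : ℕ) : Monotone (threshold n t) := by
  intro a b hab
  unfold threshold
  split_ifs <;> first | decide | omega

theorem threshold_injOn (n : ℕ) : Set.InjOn (threshold n) (range (n + 1)) := by
  intro t₁ ht₁ t₂ ht₂ h
  by_contra hne
  have hmin : min t₁ t₂ < n := by simp only [coe_range, Set.mem_Iio] at ht₁ ht₂; omega
  have := congrFun h ⟨min t₁ t₂, hmin⟩
  simp only [threshold] at this
  split_ifs at this <;> omega

theorem eq_threshold_of_monotone {n : ℕ} {f : Fin n → Fin 2} (hf : Monotone f) :
    f = threshold n #{r | f r = 0} := by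
  have hlower : IsLowerSet ((univ.filter fun r => f r = 0 : Finset (Fin n)) : Set (Fin n)) := by
    intro a b hba ha
    simp only [coe_filter, mem_univ, true_and, Set.mem_ofPred_eq] at ha ⊢
    exact Fin.le_zero_iff.mp (ha ▸ hf hba)
  funext r
  have hmem := Fin.mem_iff_lt_card_of_isLowerSet hlower r
  simp only [mem_filter, mem_univ, true_and] at hmem
  unfold threshold
  split_ifs with hr
  · exact hmem.mpr hr
  · have := mt hmem.mp hr
    omega

theorem filter_monotone_eq_image_threshold (n : ℕ)
    [DecidablePred (Monotone : (Fin n → Fin 2) → Prop)] :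
    univ.filter (fun f : Fin n → Fin 2 => Monotone f) = (range (n + 1)).image (threshold n) := by
  ext f
  simp only [mem_filter, mem_univ, true_and, mem_image, mem_range, Nat.lt_succ_iff]
  constructor
  · intro hf
    refine ⟨_, ?_, (eq_threshold_of_monotone hf).symm⟩
    exact card_le_univ _ |>.trans_eq (Fintype.card_fin n)
  · rintro ⟨t, -, rfl⟩
    exact monotone_threshold n t

def dfactPred (k : ℕ) : ℝ := dfactZ ((k : ℤ) - 1)

theorem dfactPred_zero : dfactPred 0 = 1 := by simp [dfactPred, dfactZ]

theorem dfactPred_succ (k : ℕ) : dfactPred (k + 1) = (k‼ : ℝ) := by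
  simp [dfactPred, dfactZ]

theorem dfactPred_ne_zero (k : ℕ) : dfactPred k ≠ 0 := by
  cases k with
  | zero => simp [dfactPred_zero]
  | succ k => simpa [dfactPred_succ] using (Nat.doubleFactorial_pos k).ne'

theorem dfactPred_add_two (k : ℕ) : dfactPred (k + 2) = (k + 1) * dfactPred k := by
  cases k with
  | zero => simp [dfactPred_succ, dfactPred_zero]
  | succ k => rw [dfactPred_succ, dfactPred_succ, Nat.doubleFactorial_add_one]; push_cast; ring

theorem dfactZ_div_dfactZ_eq_dfactPred (k : ℕ) :
    dfactZ ((k : ℤ) - 1) / dfactZ (k : ℤ) = dfactPred k / dfactPred (k + 1) := by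
  simp [dfactPred]

theorem prod_threshold_dfactZ_div {n t : ℕ} (ht : t ≤ n) :
    ∏ r : Fin n, dfactZ (2 * (threshold n t r : ℤ) + (r : ℤ) - 1)
        / dfactZ (2 * (threshold n t r : ℤ) + (r : ℤ))
      = ((t : ℝ) + 1) / (n + 1)‼ := by
  have hfactor (r : Fin n) :
      dfactZ (2 * (threshold n t r : ℤ) + (r : ℤ) - 1)
          / dfactZ (2 * (threshold n t r : ℤ) + (r : ℤ))
        = if (r : ℕ) < t then dfactPred r / dfactPred (r + 1)
          else dfactPred (r + 2) / dfactPred (r + 3) := by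
    unfold threshold
    split_ifs
    · simpa using dfactZ_div_dfactZ_eq_dfactPred r
    · convert dfactZ_div_dfactZ_eq_dfactPred (r + 2) using 3 <;> simp [add_comm]
  rw [prod_congr rfl fun r _ => hfactor r, Fin.prod_univ_eq_prod_range (fun r =>
      if r < t then dfactPred r / dfactPred (r + 1) else dfactPred (r + 2) / dfactPred (r + 3)),
    prod_range_ite_div_succ dfactPred_ne_zero ht, dfactPred_zero, dfactPred_add_two,
    ← dfactPred_succ]
  have := dfactPred_ne_zero t
  field_simp

theorem sum_range_succ_cast_add_one (n : ℕ) :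
    ∑ m ∈ range (n + 1), ((m : ℝ) + 1) = ((n : ℝ) + 1) * ((n : ℝ) + 2) / 2 := by
  induction n with
  | zero => simp
  | succ n ih =>
    rw [sum_range_succ, ih]
    push_cast
    ring

open Classical in
theorem sum_monotone_prod_dfact_le_one_general (n : ℕ) :
    (∑ f ∈ Finset.univ.filter (fun f : Fin n → Fin 2 => Monotone f),
        ∏ r : Fin n, dfactZ (2 * (f r : ℤ) + (r : ℤ) - 1) / dfactZ (2 * (f r : ℤ) + (r : ℤ)))
      = (∑ m ∈ Finset.range (n + 1), ((m : ℝ) + 1)) / (Nat.doubleFactorial (n + 1) : ℝ)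
    ∧ (∑ f ∈ Finset.univ.filter (fun f : Fin n → Fin 2 => Monotone f),
        ∏ r : Fin n, dfactZ (2 * (f r : ℤ) + (r : ℤ) - 1) / dfactZ (2 * (f r : ℤ) + (r : ℤ)))
      = ((n : ℝ) + 1) * ((n : ℝ) + 2) / (2 * (Nat.doubleFactorial (n + 1) : ℝ)) := by
  have hsum : (∑ f ∈ Finset.univ.filter (fun f : Fin n → Fin 2 => Monotone f),
        ∏ r : Fin n, dfactZ (2 * (f r : ℤ) + (r : ℤ) - 1) / dfactZ (2 * (f r : ℤ) + (r : ℤ)))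
      = (∑ m ∈ Finset.range (n + 1), ((m : ℝ) + 1)) / (Nat.doubleFactorial (n + 1) : ℝ) := by
    rw [filter_monotone_eq_image_threshold, sum_image (threshold_injOn n), sum_div]
    exact sum_congr rfl fun t ht => prod_threshold_dfactZ_div (Nat.lt_succ_iff.mp (mem_range.mp ht))
  refine ⟨hsum, ?_⟩
  rw [hsum, sum_range_succ_cast_add_one, div_div]

open Classical in
/-- `∑_{0 ≤ j₁ ≤ ⋯ ≤ j_n ≤ 1} ∏_{r=1}^n (2 j_r + r - 2)!!/(2 j_r + r - 1)!!
  = (1/(n+1)!!) ∑_{m=0}^n (m+1) = (n+1)(n+2)/(2 (n+1)!!)`. -/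
theorem sum_monotone_prod_dfact_le_one (n : ℕ) (hn : 1 ≤ n) :
    (∑ f ∈ Finset.univ.filter (fun f : Fin n → Fin 2 => Monotone f),
        ∏ r : Fin n, dfactZ (2 * (f r : ℤ) + (r : ℤ) - 1) / dfactZ (2 * (f r : ℤ) + (r : ℤ)))
      = (∑ m ∈ Finset.range (n + 1), ((m : ℝ) + 1)) / (Nat.doubleFactorial (n + 1) : ℝ)
    ∧ (∑ f ∈ Finset.univ.filter (fun f : Fin n → Fin 2 => Monotone f),
        ∏ r : Fin n, dfactZ (2 * (f r : ℤ) + (r : ℤ) - 1) / dfactZ (2 * (f r : ℤ) + (r : ℤ)))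
      = ((n : ℝ) + 1) * ((n : ℝ) + 2) / (2 * (Nat.doubleFactorial (n + 1) : ℝ)) :=
  sum_monotone_prod_dfact_le_one_general n
end
end

section
/- For every integer $n \geq 1$, $\sum_{0\le j_1\le j_2\le\cdots\le j_n\le 2} \prod_{r=1}^{n}\frac{(2j_r+r-2)!!}{(2j_r+r-1)!!} = \frac{n^4+10n^3+35n^2+50n+24}{8\,(n+3)!!}$, where the sum is over weakly increasing sequences with each $j_r \in \{0,1,2\}$. -/
noncomputable section

/-! A monotone `f : Fin n → Fin 3` is determined by its cut points
`a = #{f ≤ 0} ≤ b = #{f ≤ 1} ≤ n`. On each of the three blocks where `f` is constant the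
factors telescope, and the three telescoped quotients combine to `(a + 1) (b + 3) / (n + 3)!!`.
Summing `(a + 1) (b + 3)` over `a ≤ b ≤ n` gives `(n + 1) (n + 2) (n + 3) (n + 4) / 8`. -/

open Finset
open scoped Nat

lemma dfactZ_ne_zero (m : ℤ) : dfactZ m ≠ 0 := by
  unfold dfactZ; split_ifs
  · exact one_ne_zero
  · exact_mod_cast (Nat.doubleFactorial_pos _).ne'

lemma dfactZ_natCast (k : ℕ) : dfactZ k = (k‼ : ℝ) := by
  simp [dfactZ]

lemma dfactZ_add_one {m : ℤ} (hm : 0 ≤ m) : dfactZ (m + 1) = (m + 1) * dfactZ (m - 1) := by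
  lift m to ℕ using hm
  rcases m with _ | k
  · norm_num [dfactZ]
  · have h : ((k + 1 : ℕ) : ℤ) + 1 = ((k + 2 : ℕ) : ℤ) := by push_cast; ring
    have h' : ((k + 1 : ℕ) : ℤ) - 1 = (k : ℤ) := by push_cast; ring
    rw [h, h', dfactZ_natCast, dfactZ_natCast, Nat.doubleFactorial_add_two]
    push_cast; ring

lemma prod_Ico_div_succ {G : Type*} [CommGroupWithZero G] (g : ℕ → G) (hg : ∀ k, g k ≠ 0)
    {s t : ℕ} (hst : s ≤ t) : ∏ k ∈ Ico s t, g k / g (k + 1) = g s / g t := by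
  induction t, hst using Nat.le_induction with
  | base => simp [div_self (hg s)]
  | succ t hst ih => rw [prod_Ico_succ_top hst, ih, div_mul_div_cancel₀ (hg t)]

lemma Monotone.le_iff_lt_card_filter {α : Type*} [Preorder α] [DecidableLE α]
    {n : ℕ} {f : Fin n → α} (hf : Monotone f) (x : α) (r : Fin n) :
    f r ≤ x ↔ (r : ℕ) < #{s | f s ≤ x} := by
  constructor
  · intro h
    have hsub : Iic r ⊆ univ.filter (fun s => f s ≤ x) := fun s hs =>
      mem_filter.2 ⟨mem_univ s, (hf (mem_Iic.1 hs)).trans h⟩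
    have := card_le_card hsub
    rw [Fin.card_Iic] at this
    omega
  · intro h
    by_contra hc
    have hsub : univ.filter (fun s => f s ≤ x) ⊆ Iio r := fun s hs =>
      mem_Iio.2 (lt_of_not_ge fun hrs => hc ((hf hrs).trans (mem_filter.1 hs).2))
    have := card_le_card hsub
    rw [Fin.card_Iio] at this
    omega

def cutFun (n a b : ℕ) : Fin n → Fin 3 :=
  fun r => if (r : ℕ) < a then 0 else if (r : ℕ) < b then 1 else 2

lemma val_cutFun (n a b : ℕ) (r : Fin n) :
    (cutFun n a b r : ℕ) = if (r : ℕ) < a then 0 else if (r : ℕ) < b then 1 else 2 := by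
  unfold cutFun; split_ifs <;> rfl

lemma monotone_cutFun (n a b : ℕ) : Monotone (cutFun n a b) := by
  intro r s (hrs : (r : ℕ) ≤ s)
  rw [Fin.le_iff_val_le_val, val_cutFun, val_cutFun]
  split_ifs <;> omega

lemma card_cutFun_le_zero {n a : ℕ} (b : ℕ) (ha : a ≤ n) :
    #{r | cutFun n a b r ≤ 0} = a := by
  have h (r : Fin n) : cutFun n a b r ≤ 0 ↔ (r : ℕ) < a := by
    rw [Fin.le_iff_val_le_val, val_cutFun]; split_ifs <;> simp <;> omega
  rw [filter_congr fun r _ => h r, Fin.card_filter_val_lt, min_eq_right ha]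

lemma card_cutFun_le_one {n a b : ℕ} (hab : a ≤ b) (hb : b ≤ n) :
    #{r | cutFun n a b r ≤ 1} = b := by
  have h (r : Fin n) : cutFun n a b r ≤ 1 ↔ (r : ℕ) < b := by
    rw [Fin.le_iff_val_le_val, val_cutFun]; split_ifs <;> simp <;> omega
  rw [filter_congr fun r _ => h r, Fin.card_filter_val_lt, min_eq_right hb]

lemma cutFun_card_filter {n : ℕ} {f : Fin n → Fin 3} (hf : Monotone f) :
    cutFun n #{r | f r ≤ 0} #{r | f r ≤ 1} = f := by
  funext r
  have h0 := hf.le_iff_lt_card_filter 0 r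
  have h1 := hf.le_iff_lt_card_filter 1 r
  generalize #{r | f r ≤ 0} = a at h0 ⊢
  generalize #{r | f r ≤ 1} = b at h1 ⊢
  rw [Fin.le_iff_val_le_val] at h0 h1
  rw [Fin.ext_iff, val_cutFun]
  have := (f r).isLt
  split_ifs <;> simp at h0 h1 <;> omega

lemma sum_monotone_fin_three {M : Type*} [AddCommMonoid M] (n : ℕ) (F : (Fin n → Fin 3) → M) :
    ∑ f with Monotone f, F f =
      ∑ p ∈ (range (n + 1)).sigma (fun b => range (b + 1)), F (cutFun n p.2 p.1) := by
  refine sum_nbij' (fun f => ⟨#{r | f r ≤ 1}, #{r | f r ≤ 0}⟩) (fun p => cutFun n p.2 p.1)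
    ?_ (fun p _ => mem_filter.2 ⟨mem_univ _, monotone_cutFun n p.2 p.1⟩) ?_ ?_ ?_
  · intro f _
    have h01 : #{r | f r ≤ 0} ≤ #{r | f r ≤ 1} :=
      card_le_card (monotone_filter_right _ fun _ _ h => h.trans zero_le_one)
    have h1n : #{r | f r ≤ 1} ≤ n := (card_filter_le _ _).trans_eq (card_fin n)
    simp only [mem_sigma, mem_range]
    omega
  · intro f hf
    exact cutFun_card_filter (mem_filter.1 hf).2
  · rintro ⟨b, a⟩ hp
    simp only [mem_sigma, mem_range] at hp
    simp only [card_cutFun_le_zero b (by omega : a ≤ n),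
      card_cutFun_le_one (by omega : a ≤ b) (by omega : b ≤ n)]
  · intro f hf
    rw [cutFun_card_filter (mem_filter.1 hf).2]

lemma prod_Ico_dfactZ_div (c : ℤ) {s t : ℕ} (hst : s ≤ t) :
    ∏ r ∈ Ico s t, dfactZ (c + r - 1) / dfactZ (c + r)
      = dfactZ (c + s - 1) / dfactZ (c + t - 1) := by
  have := prod_Ico_div_succ (fun k : ℕ => dfactZ (c + k - 1)) (fun _ => dfactZ_ne_zero _) hst
  simpa only [Nat.cast_succ, add_sub_cancel_right, ← add_assoc] using this

lemma prod_cutFun {n a b : ℕ} (hab : a ≤ b) (hbn : b ≤ n) :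
    ∏ r : Fin n,
        dfactZ (2 * (cutFun n a b r : ℤ) + r - 1) / dfactZ (2 * (cutFun n a b r : ℤ) + r)
      = (a + 1) * (b + 3) / dfactZ (n + 3) := by
  set j : ℕ → ℕ := fun r => if r < a then 0 else if r < b then 1 else 2
  set g : ℕ → ℝ := fun r => dfactZ (2 * (j r : ℤ) + r - 1) / dfactZ (2 * (j r : ℤ) + r)
  have piece : ∀ c s t : ℕ, s ≤ t → (∀ r ∈ Ico s t, j r = c) →
      ∏ r ∈ Ico s t, g r = dfactZ (2 * c + s - 1) / dfactZ (2 * c + t - 1) :=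
    fun c s t hst hj => (prod_congr rfl fun r hr => by simp only [g, hj r hr]).trans
      (prod_Ico_dfactZ_div _ hst)
  simp only [val_cutFun]
  rw [Fin.prod_univ_eq_prod_range g n, range_eq_Ico,
    ← prod_Ico_consecutive g (Nat.zero_le a) (hab.trans hbn), ← prod_Ico_consecutive g hab hbn,
    piece 0 0 a a.zero_le fun r hr => if_pos (mem_Ico.1 hr).2,
    piece 1 a b hab fun r hr => by simp [j, (mem_Ico.1 hr).2, not_lt.2 (mem_Ico.1 hr).1],
    piece 2 b n hbn fun r hr =>
      by simp [j, not_lt.2 (mem_Ico.1 hr).1, not_lt.2 (hab.trans (mem_Ico.1 hr).1)]]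
  have e₀ : dfactZ (2 * (0 : ℕ) + (0 : ℕ) - 1) = 1 := by norm_num [dfactZ]
  have e₁ : dfactZ (2 * (1 : ℕ) + a - 1) = (a + 1) * dfactZ (2 * (0 : ℕ) + a - 1) := by
    convert dfactZ_add_one a.cast_nonneg using 2 <;> push_cast <;> ring_nf
  have e₂ : dfactZ (2 * (2 : ℕ) + b - 1) = (b + 3) * dfactZ (2 * (1 : ℕ) + b - 1) := by
    convert dfactZ_add_one (by positivity : (0 : ℤ) ≤ b + 2) using 2 <;> push_cast <;> ring_nf
  rw [e₀, e₁, e₂, show (2 * (2 : ℕ) + n - 1 : ℤ) = n + 3 by push_cast; ring]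
  field_simp [dfactZ_ne_zero]

lemma sum_range_succ_natCast_add_one (m : ℕ) :
    ∑ a ∈ range (m + 1), ((a : ℝ) + 1) = (m + 1) * (m + 2) / 2 := by
  induction m with
  | zero => norm_num
  | succ m ih => rw [sum_range_succ, ih]; push_cast; ring

lemma sum_sum_range_add_one_mul_add_three (n : ℕ) :
    ∑ b ∈ range (n + 1), ∑ a ∈ range (b + 1), ((a : ℝ) + 1) * (b + 3)
      = (n + 1) * (n + 2) * (n + 3) * (n + 4) / 8 := by
  induction n with
  | zero => norm_num
  | succ n ih =>
    rw [sum_range_succ, ih, ← sum_mul, sum_range_succ_natCast_add_one]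
    push_cast
    ring

open Classical in
theorem sum_monotone_prod_dfact_le_two_general (n : ℕ) :
    (∑ f ∈ Finset.univ.filter (fun f : Fin n → Fin 3 => Monotone f),
        ∏ r : Fin n, dfactZ (2 * (f r : ℤ) + (r : ℤ) - 1) / dfactZ (2 * (f r : ℤ) + (r : ℤ)))
      = ((n : ℝ) ^ 4 + 10 * (n : ℝ) ^ 3 + 35 * (n : ℝ) ^ 2 + 50 * (n : ℝ) + 24)
          / (8 * (Nat.doubleFactorial (n + 3) : ℝ)) := by
  have hcut : ∀ p ∈ (range (n + 1)).sigma (fun b => range (b + 1)), p.2 ≤ p.1 ∧ p.1 ≤ n :=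
    by simp +contextual
  rw [sum_monotone_fin_three, sum_congr rfl fun p hp => prod_cutFun (hcut p hp).1 (hcut p hp).2,
    sum_sigma]
  simp only [← sum_div, sum_sum_range_add_one_mul_add_three]
  rw [show (n : ℤ) + 3 = ((n + 3 : ℕ) : ℤ) by push_cast; ring, dfactZ_natCast]
  field_simp
  ring

open Classical in
/-- `∑_{0 ≤ j₁ ≤ ⋯ ≤ j_n ≤ 2} ∏_{r=1}^n (2 j_r + r - 2)!!/(2 j_r + r - 1)!!
  = (n⁴ + 10n³ + 35n² + 50n + 24)/(8 (n+3)!!)`. -/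
theorem sum_monotone_prod_dfact_le_two (n : ℕ) (hn : 1 ≤ n) :
    (∑ f ∈ Finset.univ.filter (fun f : Fin n → Fin 3 => Monotone f),
        ∏ r : Fin n, dfactZ (2 * (f r : ℤ) + (r : ℤ) - 1) / dfactZ (2 * (f r : ℤ) + (r : ℤ)))
      = ((n : ℝ) ^ 4 + 10 * (n : ℝ) ^ 3 + 35 * (n : ℝ) ^ 2 + 50 * (n : ℝ) + 24)
          / (8 * (Nat.doubleFactorial (n + 3) : ℝ)) :=
  sum_monotone_prod_dfact_le_two_general n

end
end

section
/- Fix $r \in \mathbb{R}$ and an integer $p \geq 0$. For $\lambda > 0$ let $\mathcal{M}_{p,0}(\lambda, a) = \frac{1}{\lambda}\sum_{l=0}^{\lfloor p/2\rfloor}(a+1)^{p-2l}(-a)^{l}\frac{(p-l-1)!}{l!\,(p-2l)!}\sum_{j=l+1}^{p}\binom{p}{j}(1-e^{-\lambda})^{j}e^{-\lambda(p-j)}$. Then $\lim_{\lambda\to 0^+} \lambda^{-p/2}\, \mathcal{M}_{p,0}(\lambda, -1+r\sqrt{\lambda}) = \sum_{l=0}^{\lfloor p/2\rfloor}\binom{p}{2l}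 r^{p-2l} C_l$, where $C_l = \frac{1}{l+1}\binom{2l}{l}$ is the $l$-th Catalan number. -/
/-!
With `a = -1 + r√λ` we have `a + 1 = r√λ` and `-a = 1 - r√λ`, so after the prefactor
`λ^(-p/2) / λ` the `l`-th summand is `r^(p-2l) (1 - r√λ)^l c_l · T_l(λ) / λ^(l+1)`, where
`T_l = ∑_{j>l} C(p,j) (1-e^{-λ})^j e^{-λ(p-j)}` is a binomial tail. Since `1 - e^{-λ} ~ λ`,
`T_l(λ) ~ C(p,l+1) λ^(l+1)`, and for `c_l = (p-l-1)!/(l! (p-2l)!)` the product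
`c_l C(p,l+1) = C(p,2l) C_l` is a factorial identity.
-/

open Filter Real Finset Topology

lemma tendsto_one_sub_exp_neg_div :
    Tendsto (fun x : ℝ => (1 - exp (-x)) / x) (𝓝[≠] 0) (𝓝 1) := by
  have h : HasDerivAt (fun x : ℝ => 1 - exp (-x)) 1 0 := by
    simpa using ((hasDerivAt_exp _).comp 0 (hasDerivAt_neg 0)).const_sub 1
  refine h.tendsto_slope_zero.congr fun x => ?_
  simp [div_eq_inv_mul]

/-- Only the `j = m` term survives: the others carry an extra factor `u^(j - m) → 0`. -/
lemma tendsto_sum_Icc_choose_mul_pow_div_pow {α : Type*} {L : Filter α} {t u v : α → ℝ}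
    (hut : Tendsto (fun a => u a / t a) L (𝓝 1)) (hu : Tendsto u L (𝓝 0))
    (hv : Tendsto v L (𝓝 1)) (ht : ∀ᶠ a in L, t a ≠ 0) (m p : ℕ) :
    Tendsto (fun a => (∑ j ∈ Icc m p, (p.choose j : ℝ) * u a ^ j * v a ^ (p - j)) / t a ^ m) L
      (𝓝 (p.choose m)) := by
  have hterm : ∀ j ∈ Icc m p, Tendsto
      (fun a => (p.choose j : ℝ) * (u a / t a) ^ m * u a ^ (j - m) * v a ^ (p - j)) L
      (𝓝 ((p.choose j : ℝ) * 1 ^ m * 0 ^ (j - m) * 1 ^ (p - j))) :=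
    fun j _ => ((tendsto_const_nhds.mul (hut.pow m)).mul (hu.pow _)).mul (hv.pow _)
  have hsum : ∑ j ∈ Icc m p, (p.choose j : ℝ) * 1 ^ m * 0 ^ (j - m) * 1 ^ (p - j) =
      p.choose m := by
    rw [sum_eq_single m]
    · simp
    · intro j hj hjm
      have : j - m ≠ 0 := by grind
      simp [this]
    · intro hm
      simp_all [Nat.choose_eq_zero_of_lt]
  rw [← hsum]
  refine (tendsto_finsetSum _ hterm).congr' ?_
  filter_upwards [ht] with a ha
  rw [sum_div]
  refine sum_congr rfl fun j hj => ?_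
  rw [← pow_mul_pow_sub (u a) (mem_Icc.1 hj).1, div_pow]
  field_simp

lemma rpow_neg_half_mul_sqrt_pow {t : ℝ} (ht : 0 < t) {p l : ℕ} (h : 2 * l ≤ p) :
    t ^ (-(p : ℝ) / 2) * √t ^ (p - 2 * l) = (t ^ l)⁻¹ := by
  have hp : √t ^ p = √t ^ (p - 2 * l) * t ^ l := by
    rw [← pow_mul_pow_sub _ h, pow_mul, sq_sqrt ht.le, mul_comm]
  have hpow : t ^ (-(p : ℝ) / 2) = (√t ^ p)⁻¹ := by
    rw [sqrt_eq_rpow, ← rpow_natCast, ← rpow_mul ht.le, ← rpow_neg ht.le]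
    ring_nf
  have : √t ^ (p - 2 * l) ≠ 0 := by positivity
  rw [hpow, hp]
  field_simp

lemma rpow_neg_half_mul_summand_eq {t : ℝ} (ht : 0 < t) {p l : ℕ} (h : 2 * l ≤ p) (r c S : ℝ) :
    t ^ (-(p : ℝ) / 2) *
        (1 / t * ((-1 + r * √t + 1) ^ (p - 2 * l) * (-(-1 + r * √t)) ^ l * c * S)) =
      r ^ (p - 2 * l) * (1 - r * √t) ^ l * c * (S / t ^ (l + 1)) := by
  calc _ = r ^ (p - 2 * l) * (1 - r * √t) ^ l * c * S *
        (t ^ (-(p : ℝ) / 2) * √t ^ (p - 2 * l)) / t := by ring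
    _ = _ := by
      rw [rpow_neg_half_mul_sqrt_pow ht h, pow_succ]
      field_simp

lemma factorial_div_mul_choose_succ {p l : ℕ} (h2 : 2 * l ≤ p) (h1 : l + 1 ≤ p) :
    ((p - l - 1).factorial : ℝ) / ((l.factorial : ℝ) * ((p - 2 * l).factorial : ℝ)) *
      (p.choose (l + 1) : ℝ) =
    (p.choose (2 * l) : ℝ) * (((2 * l).choose l : ℝ) / ((l : ℝ) + 1)) := by
  rw [Nat.cast_choose ℝ h1, Nat.cast_choose ℝ h2, Nat.cast_choose ℝ (by omega : l ≤ 2 * l),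
    show p - (l + 1) = p - l - 1 by omega, show 2 * l - l = l by omega, Nat.factorial_succ]
  push_cast
  field_simp

/-- Continuum limit of the leading moment coefficient: with `a = -1 + r√λ`,
`lim_{λ→0⁺} λ^{-p/2} M_{p,0}(λ, -1 + r√λ) = ∑_{l=0}^{⌊p/2⌋} \binom{p}{2l} r^{p-2l} C_l`,
where `C_l = \binom{2l}{l}/(l+1)` is the `l`-th Catalan number, and `M_{p,0}` is given by
the binomial-sum representation. -/
theorem continuum_limit_M_p0 (r : ℝ) (p : ℕ) (hp : 1 ≤ p) :
    Tendsto (fun lam : ℝ =>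
        lam ^ (-(p : ℝ) / 2) *
          ((1 / lam) * ∑ l ∈ Finset.range (p / 2 + 1),
            ((-1 + r * Real.sqrt lam) + 1) ^ (p - 2 * l) * (-(-1 + r * Real.sqrt lam)) ^ l *
              (((p - l - 1).factorial : ℝ) /
                ((l.factorial : ℝ) * ((p - 2 * l).factorial : ℝ))) *
              ∑ j ∈ Finset.Icc (l + 1) p,
                (p.choose j : ℝ) * (1 - Real.exp (-lam)) ^ j * Real.exp (-lam) ^ (p - j)))
      (nhdsWithin 0 (Set.Ioi 0))
      (nhds (∑ l ∈ Finset.range (p / 2 + 1),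
        (p.choose (2 * l) : ℝ) * r ^ (p - 2 * l) * (((2 * l).choose l : ℝ) / ((l : ℝ) + 1)))) := by
  have hcont {f : ℝ → ℝ} (hf : Continuous f) : Tendsto f (𝓝[>] 0) (𝓝 (f 0)) :=
    hf.continuousAt.tendsto.mono_left nhdsWithin_le_nhds
  have htail := tendsto_sum_Icc_choose_mul_pow_div_pow
    (tendsto_one_sub_exp_neg_div.mono_left (nhdsGT_le_nhdsNE 0))
    (by simpa using hcont (f := fun x => 1 - exp (-x)) (by fun_prop))
    (by simpa using hcont (f := fun x => exp (-x)) (by fun_prop))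
    (eventually_nhdsWithin_of_forall fun x (hx : 0 < x) => hx.ne')
  have hbounds {l} (hl : l ∈ range (p / 2 + 1)) : 2 * l ≤ p ∧ l + 1 ≤ p := by
    rw [mem_range] at hl
    omega
  have hterm : ∀ l ∈ range (p / 2 + 1), Tendsto (fun lam => r ^ (p - 2 * l) * (1 - r * √lam) ^ l *
      (((p - l - 1).factorial : ℝ) / ((l.factorial : ℝ) * ((p - 2 * l).factorial : ℝ))) *
      ((∑ j ∈ Icc (l + 1) p, (p.choose j : ℝ) * (1 - exp (-lam)) ^ j * exp (-lam) ^ (p - j)) /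
        lam ^ (l + 1))) (𝓝[>] 0)
      (𝓝 ((p.choose (2 * l) : ℝ) * r ^ (p - 2 * l) * (((2 * l).choose l : ℝ) / ((l : ℝ) + 1)))) := by
    intro l hl
    have hsqrt : Tendsto (fun lam => (1 - r * √lam) ^ l) (𝓝[>] 0) (𝓝 1) := by
      simpa using hcont (f := fun lam => (1 - r * √lam) ^ l) (by fun_prop)
    convert ((tendsto_const_nhds.mul hsqrt).mul tendsto_const_nhds).mul (htail (l + 1) p) using 2
    rw [mul_one, mul_assoc (r ^ _), factorial_div_mul_choose_succ (hbounds hl).1 (hbounds hl).2]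
    ring
  refine (tendsto_finsetSum _ hterm).congr' ?_
  filter_upwards [self_mem_nhdsWithin] with lam (hlam : 0 < lam)
  rw [mul_sum, mul_sum]
  exact sum_congr rfl fun l hl => (rpow_neg_half_mul_summand_eq hlam (hbounds hl).1 _ _ _).symm
end
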